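/- Let n ≥ 3 and let γ(t) = z(t)·(0, 1, r₃(t), …, r_n(t)) ∈ ℂ^n (with z : I → ℂ∖{0} and r₃,…,r_n : I → ℝ twice differentiable on an open interval I) satisfy condition Geo_n. Let λ : I → ℂ be twice differentiable and set λ⃗(t) = (λ(t), …, λ(t)) ∈ ℂ^n and γ̂(t) = γ(t) + λ⃗(t). Then γ̂ satisfies condition Ĝeo_n if and only if λ''(t) = 0 for all t, ⟪γ''(t), 1⃗⟫ = 0 for all t, and ⟪γ''(t), i⃗⟫ = 0 for all t, where 1⃗ = (1,…,1) and i⃗ = (i,…,i) ∈ ℂ^n. -/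

import Mathlib

open Complex Filter Set

noncomputable section

/-- The standard real inner product `⟪Z, W⟫ = Σ_j Re(Z_j · conj(W_j))` on `ℂ^n ≅ ℝ^{2n}`. -/
def rinner {n : ℕ} (Z W : Fin n → ℂ) : ℝ :=
  ∑ j, (Z j * (starRingEnd ℂ) (W j)).re

/-- Condition `Geo_n` for a curve `γ(t) = z(t)·(0, 1, r₃(t), …, r_n(t))` with first and second
derivatives `γ'`, `γ''` on an open interval `I`: constant speed, plus `γ''(t) ⟂ i·γ(t)` and
`γ''(t) ⟂ z(t)·e_j` for all `j = 2, …, n`. -/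
def Geo {n : ℕ} (I : Set ℝ) (z : ℝ → ℂ) (γ γ' γ'' : ℝ → Fin n → ℂ) : Prop :=
  (∃ c : ℝ, ∀ t ∈ I, rinner (γ' t) (γ' t) = c) ∧
  (∀ t ∈ I, rinner (γ'' t) (fun j => Complex.I * γ t j) = 0) ∧
  (∀ t ∈ I, ∀ j : Fin n, (j : ℕ) ≠ 0 →
    rinner (γ'' t) (fun k => if k = j then z t else 0) = 0)

/-- Condition `Ĝeo_n` for `γ̂ = γ + λ⃗` (with `γ̂' = γ' + λ⃗'`, `γ̂'' = γ'' + λ⃗''`):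
constant speed, plus `γ̂''(t)` orthogonal to each of `i·γ(t)`, `z(t)·e_j` (`j = 2, …, n`),
`1⃗ = (1,…,1)` and `i⃗ = (i,…,i)`. -/
def GeoHat {n : ℕ} (I : Set ℝ) (z : ℝ → ℂ) (γ γ' γ'' : ℝ → Fin n → ℂ)
    (lam lam' lam'' : ℝ → ℂ) : Prop :=
  (∃ c : ℝ, ∀ t ∈ I,
    rinner (fun j => γ' t j + lam' t) (fun j => γ' t j + lam' t) = c) ∧
  (∀ t ∈ I, rinner (fun j => γ'' t j + lam'' t) (fun j => Complex.I * γ t j) = 0) ∧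
  (∀ t ∈ I, ∀ j : Fin n, (j : ℕ) ≠ 0 →
    rinner (fun k => γ'' t k + lam'' t) (fun k => if k = j then z t else 0) = 0) ∧
  (∀ t ∈ I, rinner (fun j => γ'' t j + lam'' t) (fun _ => (1 : ℂ)) = 0) ∧
  (∀ t ∈ I, rinner (fun j => γ'' t j + lam'' t) (fun _ => Complex.I) = 0)

lemma rinner_add_left {n : ℕ} (f g w : Fin n → ℂ) :
    rinner (fun j => f j + g j) w = rinner f w + rinner g w := by
  simp [rinner, add_mul, Finset.sum_add_distrib]

lemma rinner_add_right {n : ℕ} (w f g : Fin n → ℂ) :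
    rinner w (fun j => f j + g j) = rinner w f + rinner w g := by
  simp [rinner, mul_add, Finset.sum_add_distrib]

lemma rinner_const_right {n : ℕ} (f : Fin n → ℂ) (c : ℂ) :
    rinner f (fun _ => c) = ((∑ j, f j) * (starRingEnd ℂ) c).re := by
  simp [rinner, Finset.sum_mul, Complex.re_sum]

lemma rinner_const_left {n : ℕ} (c : ℂ) (w : Fin n → ℂ) :
    rinner (fun _ => c) w = (c * (starRingEnd ℂ) (∑ j, w j)).re := by
  simp [rinner, map_sum, Finset.mul_sum, Complex.re_sum]

lemma rinner_const_single {n : ℕ} (c zt : ℂ) (j : Fin n) :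
    rinner (fun _ => c) (fun k => if k = j then zt else 0) = (c * (starRingEnd ℂ) zt).re := by
  rw [rinner_const_left]
  simp [Finset.sum_ite_eq']

lemma rinner_const_const {n : ℕ} (c d : ℂ) :
    rinner (fun _ : Fin n => c) (fun _ => d) = n * (c * (starRingEnd ℂ) d).re := by
  simp only [rinner, Finset.sum_const, Finset.card_univ, Fintype.card_fin, nsmul_eq_mul]

lemma rinner_comm {n : ℕ} (f w : Fin n → ℂ) : rinner f w = rinner w f := by
  unfold rinner
  congr 1; funext j
  rw [show w j * (starRingEnd ℂ) (f j) = (starRingEnd ℂ) (f j * (starRingEnd ℂ) (w j)) by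
    rw [map_mul, Complex.conj_conj]; ring]
  simp

lemma const_of_hasDerivAt_zero {s : Set ℝ} (hs : Convex ℝ s) {f : ℝ → ℂ}
    (hf : ∀ x ∈ s, HasDerivAt f 0 x) {x y : ℝ} (hx : x ∈ s) (hy : y ∈ s) : f x = f y := by
  have h := hs.norm_image_sub_le_of_norm_hasDerivWithin_le (C := 0) (f' := fun _ => (0 : ℂ))
    (fun a ha => (hf a ha).hasDerivWithinAt) (fun a _ => by simp) hx hy
  have h0 : ‖f y - f x‖ ≤ 0 := by simpa using h
  have := le_antisymm h0 (norm_nonneg _)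
  rw [norm_eq_zero, sub_eq_zero] at this
  exact this.symm

theorem geodesic_Lset_iff (m : ℕ) (I : Set ℝ)
    (hIopen : IsOpen I) (hIconv : Convex ℝ I) (hIne : I.Nonempty)
    (z z' z'' : ℝ → ℂ) (r r' r'' : Fin (m + 1) → ℝ → ℝ)
    (hz0 : ∀ t ∈ I, z t ≠ 0)
    (hz1 : ∀ t ∈ I, HasDerivAt z (z' t) t)
    (hz2 : ∀ t ∈ I, HasDerivAt z' (z'' t) t)
    (hr1 : ∀ i, ∀ t ∈ I, HasDerivAt (r i) (r' i t) t)
    (hr2 : ∀ i, ∀ t ∈ I, HasDerivAt (r' i) (r'' i t) t)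
    -- the curve γ(t) = z(t)·(0, 1, r₃(t), …, r_n(t)) and its derivatives
    (γ γ' γ'' : ℝ → Fin (m + 3) → ℂ)
    (hγ : ∀ t ∈ I, γ t = fun j =>
      z t * ((Fin.cons (0 : ℂ) (Fin.cons (1 : ℂ)
        (fun i : Fin (m + 1) => ((r i t : ℝ) : ℂ))) : Fin (m + 3) → ℂ) j))
    (hγ1 : ∀ t ∈ I, HasDerivAt γ (γ' t) t)
    (hγ2 : ∀ t ∈ I, HasDerivAt γ' (γ'' t) t)
    (hGeo : Geo I z γ γ' γ'')
    -- the diagonal part λ and its derivatives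
    (lam lam' lam'' : ℝ → ℂ)
    (hlam1 : ∀ t ∈ I, HasDerivAt lam (lam' t) t)
    (hlam2 : ∀ t ∈ I, HasDerivAt lam' (lam'' t) t) :
    GeoHat I z γ γ' γ'' lam lam' lam'' ↔
      ((∀ t ∈ I, lam'' t = 0) ∧
       (∀ t ∈ I, rinner (γ'' t) (fun _ => (1 : ℂ)) = 0) ∧
       (∀ t ∈ I, rinner (γ'' t) (fun _ => Complex.I) = 0)) := by
  obtain ⟨hGeo1, hGeo2, hGeo3⟩ := hGeo
  -- the sum of the components of γ
  have hsumγ : ∀ t ∈ I, (∑ j, γ t j) = z t * ((1 + ∑ i, r i t : ℝ) : ℂ) := by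
    intro t ht
    rw [hγ t ht, ← Finset.mul_sum]
    congr 1
    rw [Fin.sum_cons, Fin.sum_cons]
    push_cast
    ring
  have hA1 : ∀ t ∈ I, HasDerivAt (fun s => 1 + ∑ i, r i s) (∑ i, r' i t) t := by
    intro t ht
    exact (HasDerivAt.fun_sum (fun i _ => hr1 i t ht)).const_add 1
  have hA2 : ∀ t ∈ I, HasDerivAt (fun s => ∑ i, r' i s) (∑ i, r'' i t) t := by
    intro t ht
    exact HasDerivAt.fun_sum (fun i _ => hr2 i t ht)
  -- first derivative of the sum of components
  have hT : ∀ t ∈ I, (∑ j, γ' t j) =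
      z' t * ((1 + ∑ i, r i t : ℝ) : ℂ) + z t * ((∑ i, r' i t : ℝ) : ℂ) := by
    intro t ht
    have h1 : HasDerivAt (fun s => ∑ j, γ s j) (∑ j, γ' t j) t :=
      HasDerivAt.fun_sum (fun j _ => hasDerivAt_pi.1 (hγ1 t ht) j)
    have h2 : HasDerivAt (fun s => z s * ((1 + ∑ i, r i s : ℝ) : ℂ))
        (z' t * ((1 + ∑ i, r i t : ℝ) : ℂ) + z t * ((∑ i, r' i t : ℝ) : ℂ)) t :=
      (hz1 t ht).mul (hA1 t ht).ofReal_comp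
    have heq : (fun s => ∑ j, γ s j) =ᶠ[nhds t] (fun s => z s * ((1 + ∑ i, r i s : ℝ) : ℂ)) := by
      filter_upwards [hIopen.mem_nhds ht] with s hs using hsumγ s hs
    exact h1.unique (h2.congr_of_eventuallyEq heq)
  -- second derivative of the sum of components
  have hS : ∀ t ∈ I, (∑ j, γ'' t j) =
      z'' t * ((1 + ∑ i, r i t : ℝ) : ℂ) + 2 * z' t * ((∑ i, r' i t : ℝ) : ℂ)
        + z t * ((∑ i, r'' i t : ℝ) : ℂ) := by
    intro t ht
    have h1 : HasDerivAt (fun s => ∑ j, γ' s j) (∑ j, γ'' t j) t :=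
      HasDerivAt.fun_sum (fun j _ => hasDerivAt_pi.1 (hγ2 t ht) j)
    have h2 : HasDerivAt (fun s => z' s * ((1 + ∑ i, r i s : ℝ) : ℂ)
          + z s * ((∑ i, r' i s : ℝ) : ℂ))
        ((z'' t * ((1 + ∑ i, r i t : ℝ) : ℂ) + z' t * ((∑ i, r' i t : ℝ) : ℂ))
          + (z' t * ((∑ i, r' i t : ℝ) : ℂ) + z t * ((∑ i, r'' i t : ℝ) : ℂ))) t :=
      ((hz2 t ht).mul (hA1 t ht).ofReal_comp).add ((hz1 t ht).mul (hA2 t ht).ofReal_comp)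
    have heq : (fun s => ∑ j, γ' s j) =ᶠ[nhds t]
        (fun s => z' s * ((1 + ∑ i, r i s : ℝ) : ℂ) + z s * ((∑ i, r' i s : ℝ) : ℂ)) := by
      filter_upwards [hIopen.mem_nhds ht] with s hs using hT s hs
    rw [h1.unique (h2.congr_of_eventuallyEq heq)]
    ring
  constructor
  · rintro ⟨hG1, hG2, hG3, hG4, hG5⟩
    -- E1 : the real part of lam'' * conj z vanishes
    have E1 : ∀ t ∈ I, (lam'' t * (starRingEnd ℂ) (z t)).re = 0 := by
      intro t ht
      have hj : (((⟨1, by omega⟩ : Fin (m + 3))) : ℕ) ≠ 0 := by simp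
      have h : rinner (fun k => γ'' t k + (fun _ : Fin (m+3) => lam'' t) k)
          (fun k => if k = (⟨1, by omega⟩ : Fin (m + 3)) then z t else 0) = 0 :=
        hG3 t ht _ hj
      rw [rinner_add_left, hGeo3 t ht _ hj, rinner_const_single] at h
      linarith
    -- E2 : (1 + ρ) * Im(lam'' conj z) = 0
    have E2 : ∀ t ∈ I, (1 + ∑ i, r i t) * (lam'' t * (starRingEnd ℂ) (z t)).im = 0 := by
      intro t ht
      have h : rinner (fun k => γ'' t k + (fun _ : Fin (m+3) => lam'' t) k)
          (fun j => Complex.I * γ t j) = 0 := hG2 t ht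
      rw [rinner_add_left, hGeo2 t ht, rinner_const_left, ← Finset.mul_sum, hsumγ t ht] at h
      have hcalc : (lam'' t * (starRingEnd ℂ) (Complex.I * (z t * ((1 + ∑ i, r i t : ℝ) : ℂ)))).re
          = (1 + ∑ i, r i t) * (lam'' t * (starRingEnd ℂ) (z t)).im := by
        simp [map_mul, Complex.conj_I, Complex.conj_ofReal, Complex.mul_re, Complex.mul_im,
          Complex.I_re, Complex.I_im, Complex.ofReal_re, Complex.ofReal_im]
        ring
      rw [hcalc] at h
      linarith
    -- E3 : sum of γ'' components equals -(m+3) lam''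
    have E3 : ∀ t ∈ I, (∑ j, γ'' t j) = -((m + 3 : ℕ) : ℂ) * lam'' t := by
      intro t ht
      have h4 : rinner (fun k => γ'' t k + (fun _ : Fin (m+3) => lam'' t) k)
          (fun _ => (1 : ℂ)) = 0 := hG4 t ht
      have h5 : rinner (fun k => γ'' t k + (fun _ : Fin (m+3) => lam'' t) k)
          (fun _ => Complex.I) = 0 := hG5 t ht
      rw [rinner_add_left, rinner_const_right, rinner_const_const] at h4 h5
      have hre : ((∑ j, γ'' t j) + ((m + 3 : ℕ) : ℂ) * lam'' t).re = 0 := by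
        simp only [map_one, mul_one, Fintype.card_fin] at h4
        simp only [Complex.add_re, Complex.mul_re, Complex.natCast_re, Complex.natCast_im]
        push_cast at h4 ⊢
        linarith
      have him : ((∑ j, γ'' t j) + ((m + 3 : ℕ) : ℂ) * lam'' t).im = 0 := by
        simp only [Complex.conj_I, mul_neg, Complex.neg_re, Complex.mul_I_re,
          Fintype.card_fin, neg_neg] at h5
        simp only [Complex.add_im, Complex.mul_im, Complex.natCast_re, Complex.natCast_im]
        push_cast at h5 ⊢
        linarith
      have : (∑ j, γ'' t j) + ((m + 3 : ℕ) : ℂ) * lam'' t = 0 := Complex.ext hre him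
      linear_combination this
    -- points where 1 + ρ ≠ 0
    have Hne : ∀ s ∈ I, (1 + ∑ i, r i s) ≠ 0 → lam'' s = 0 := by
      intro s hs hne
      have him : (lam'' s * (starRingEnd ℂ) (z s)).im = 0 :=
        (mul_eq_zero.1 (E2 s hs)).resolve_left hne
      have hw : lam'' s * (starRingEnd ℂ) (z s) = 0 := Complex.ext (E1 s hs) him
      have hz' : (starRingEnd ℂ) (z s) ≠ 0 := by
        simpa using (starRingEnd ℂ).injective.ne (hz0 s hs)
      exact (mul_eq_zero.1 hw).resolve_right hz'
    -- main claim : lam'' vanishes on I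
    have hmain : ∀ t ∈ I, lam'' t = 0 := by
      intro t₀ ht₀
      by_cases hc : (1 + ∑ i, r i t₀) = 0
      · by_cases hd : (∑ i, r' i t₀) = 0
        · -- both 1+ρ and ρ' vanish : S = z ρ'' is "real times z"
          have hS0 := hS t₀ ht₀
          rw [hc, hd] at hS0
          simp only [Complex.ofReal_zero, mul_zero, zero_add, zero_mul, add_zero] at hS0
          have heq : -((m + 3 : ℕ) : ℂ) * lam'' t₀ = z t₀ * ((∑ i, r'' i t₀ : ℝ) : ℂ) :=
            (E3 t₀ ht₀).symm.trans hS0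
          have heq2 : -((m + 3 : ℕ) : ℂ) * (lam'' t₀ * (starRingEnd ℂ) (z t₀))
              = ((Complex.normSq (z t₀) : ℝ) : ℂ) * ((∑ i, r'' i t₀ : ℝ) : ℂ) := by
            calc -((m + 3 : ℕ) : ℂ) * (lam'' t₀ * (starRingEnd ℂ) (z t₀))
                = (-((m + 3 : ℕ) : ℂ) * lam'' t₀) * (starRingEnd ℂ) (z t₀) := by ring
              _ = (z t₀ * ((∑ i, r'' i t₀ : ℝ) : ℂ)) * (starRingEnd ℂ) (z t₀) := by rw [heq]
              _ = ((Complex.normSq (z t₀) : ℝ) : ℂ) * ((∑ i, r'' i t₀ : ℝ) : ℂ) := by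
                  rw [mul_right_comm, Complex.mul_conj]
          have him : (lam'' t₀ * (starRingEnd ℂ) (z t₀)).im = 0 := by
            have h := congrArg Complex.im heq2
            simp only [Complex.mul_im, Complex.neg_re, Complex.neg_im, Complex.natCast_re,
              Complex.natCast_im, Complex.ofReal_re, Complex.ofReal_im] at h
            push_cast at h
            field_simp at h
            have h2 : (-((lam'' t₀).re * (z t₀).im) + (lam'' t₀).im * (z t₀).re) = 0 := by
              have hm : ((m : ℝ) + 3) ≠ 0 := by positivity
              simp only [Complex.conj_re, Complex.conj_im] at h
              have h3 : ((m : ℝ) + 3) * (-((lam'' t₀).re * (z t₀).im) + (lam'' t₀).im * (z t₀).re) = 0 := by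
                linear_combination -h
              exact (mul_eq_zero.1 h3).resolve_left hm
            simp only [Complex.mul_im, Complex.conj_re, Complex.conj_im]
            linarith
          have hw : lam'' t₀ * (starRingEnd ℂ) (z t₀) = 0 := Complex.ext (E1 t₀ ht₀) him
          have hz' : (starRingEnd ℂ) (z t₀) ≠ 0 := by
            simpa using (starRingEnd ℂ).injective.ne (hz0 t₀ ht₀)
          exact (mul_eq_zero.1 hw).resolve_right hz'
        · -- 1+ρ(t₀)=0 but ρ'(t₀)≠0 : zeros of 1+ρ are isolated near t₀
          have hψ : HasDerivAt (fun s => 1 + ∑ i, r i s) (∑ i, r' i t₀) t₀ := hA1 t₀ ht₀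
          have hslope : Tendsto (slope (fun s => 1 + ∑ i, r i s) t₀) (nhdsWithin t₀ {t₀}ᶜ)
              (nhds (∑ i, r' i t₀)) := hasDerivAt_iff_tendsto_slope.1 hψ
          have hev : ∀ᶠ s in nhdsWithin t₀ {t₀}ᶜ, slope (fun s => 1 + ∑ i, r i s) t₀ s ≠ 0 :=
            hslope.eventually_ne hd
          have hψne : ∀ᶠ s in nhdsWithin t₀ {t₀}ᶜ, (1 + ∑ i, r i s) ≠ 0 := by
            filter_upwards [hev] with s hs
            intro h0
            apply hs
            simp [slope_def_field, h0, hc]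
          have hImem : ∀ᶠ s in nhdsWithin t₀ {t₀}ᶜ, s ∈ I :=
            mem_nhdsWithin_of_mem_nhds (hIopen.mem_nhds ht₀)
          have hlz : ∀ᶠ s in nhdsWithin t₀ {t₀}ᶜ, lam'' s = 0 ∧ s ∈ I := by
            filter_upwards [hψne, hImem] with s h1 h2
            exact ⟨Hne s h2 h1, h2⟩
          rw [eventually_nhdsWithin_iff] at hlz
          rw [Metric.eventually_nhds_iff] at hlz
          obtain ⟨ε, hε, hball⟩ := hlz
          -- lam' is constant on each of the one-sided intervals
          have hconst : ∀ (J : Set ℝ), Convex ℝ J → (∀ x ∈ J, dist x t₀ < ε ∧ x ≠ t₀) →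
              ∀ x ∈ J, ∀ y ∈ J, lam' x = lam' y := by
            intro J hJconv hJ x hx y hy
            refine const_of_hasDerivAt_zero hJconv (fun a ha => ?_) hx hy
            obtain ⟨ha1, ha2⟩ := hJ a ha
            obtain ⟨hl0, haI⟩ := hball ha1 (by simpa using ha2)
            have := hlam2 a haI
            rwa [hl0] at this
          have hcontR : Tendsto lam' (nhdsWithin t₀ (Ioi t₀)) (nhds (lam' t₀)) :=
            ((hlam2 t₀ ht₀).continuousAt).continuousWithinAt
          have hcontL : Tendsto lam' (nhdsWithin t₀ (Iio t₀)) (nhds (lam' t₀)) :=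
            ((hlam2 t₀ ht₀).continuousAt).continuousWithinAt
          have hR : ∀ x ∈ Ioo t₀ (t₀ + ε), lam' x = lam' t₀ := by
            intro x hx
            have hJ : ∀ y ∈ Ioo t₀ (t₀ + ε), dist y t₀ < ε ∧ y ≠ t₀ := by
              intro y hy
              constructor
              · rw [Real.dist_eq, abs_lt]; constructor <;> [linarith [hy.1, hy.2]; linarith [hy.1, hy.2]]
              · exact ne_of_gt hy.1
            have hmemf : Ioo t₀ (t₀ + ε) ∈ nhdsWithin t₀ (Ioi t₀) :=
              Ioo_mem_nhdsGT_of_mem ⟨le_refl t₀, by linarith⟩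
            have hevc : lam' =ᶠ[nhdsWithin t₀ (Ioi t₀)] (fun _ => lam' x) := by
              filter_upwards [hmemf] with y hy
              exact hconst _ (convex_Ioo _ _) hJ y hy x hx
            have h2 : Tendsto lam' (nhdsWithin t₀ (Ioi t₀)) (nhds (lam' x)) :=
              Tendsto.congr' hevc.symm tendsto_const_nhds
            exact tendsto_nhds_unique h2 hcontR
          have hL : ∀ x ∈ Ioo (t₀ - ε) t₀, lam' x = lam' t₀ := by
            intro x hx
            have hJ : ∀ y ∈ Ioo (t₀ - ε) t₀, dist y t₀ < ε ∧ y ≠ t₀ := by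
              intro y hy
              constructor
              · rw [Real.dist_eq, abs_lt]; constructor <;> [linarith [hy.1, hy.2]; linarith [hy.1, hy.2]]
              · exact ne_of_lt hy.2
            have hmemf : Ioo (t₀ - ε) t₀ ∈ nhdsWithin t₀ (Iio t₀) :=
              Ioo_mem_nhdsLT_of_mem ⟨by linarith, le_refl t₀⟩
            have hevc : lam' =ᶠ[nhdsWithin t₀ (Iio t₀)] (fun _ => lam' x) := by
              filter_upwards [hmemf] with y hy
              exact hconst _ (convex_Ioo _ _) hJ y hy x hx
            have h2 : Tendsto lam' (nhdsWithin t₀ (Iio t₀)) (nhds (lam' x)) :=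
              Tendsto.congr' hevc.symm tendsto_const_nhds
            exact tendsto_nhds_unique h2 hcontL
          have heq : ∀ᶠ y in nhds t₀, lam' y = lam' t₀ := by
            rw [Metric.eventually_nhds_iff]
            refine ⟨ε, hε, fun y hy => ?_⟩
            rcases lt_trichotomy y t₀ with h | h | h
            · refine hL y ⟨?_, h⟩
              rw [Real.dist_eq, abs_lt] at hy; linarith [hy.1]
            · rw [h]
            · refine hR y ⟨h, ?_⟩
              rw [Real.dist_eq, abs_lt] at hy; linarith [hy.2]
          have hzero : HasDerivAt lam' 0 t₀ :=
            (hasDerivAt_const t₀ (lam' t₀)).congr_of_eventuallyEq heq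
          exact (hlam2 t₀ ht₀).unique hzero
      · exact Hne t₀ ht₀ hc
    refine ⟨hmain, ?_, ?_⟩
    · intro t ht
      have h := hG4 t ht
      rw [hmain t ht] at h
      simpa using h
    · intro t ht
      have h := hG5 t ht
      rw [hmain t ht] at h
      simpa using h
  · rintro ⟨hl, h1, hi⟩
    obtain ⟨cγ, hGeo1c⟩ := hGeo1
    -- the sum of γ'' components vanishes
    have hS0 : ∀ t ∈ I, (∑ j, γ'' t j) = 0 := by
      intro t ht
      have a1 := h1 t ht
      have a2 := hi t ht
      rw [rinner_const_right] at a1 a2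
      refine Complex.ext ?_ ?_
      · simpa using a1
      · simpa [Complex.conj_I, mul_neg, Complex.mul_I_re] using a2
    obtain ⟨t₀, ht₀⟩ := hIne
    have hTd : ∀ t ∈ I, HasDerivAt (fun s => ∑ j, γ' s j) 0 t := by
      intro t ht
      have h := HasDerivAt.fun_sum (fun j (_ : j ∈ Finset.univ) => hasDerivAt_pi.1 (hγ2 t ht) j)
      rwa [hS0 t ht] at h
    have hTconst : ∀ t ∈ I, (∑ j, γ' t j) = ∑ j, γ' t₀ j :=
      fun t ht => const_of_hasDerivAt_zero hIconv hTd ht ht₀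
    have hlconst : ∀ t ∈ I, lam' t = lam' t₀ := by
      intro t ht
      refine const_of_hasDerivAt_zero hIconv (fun x hx => ?_) ht ht₀
      have := hlam2 x hx
      rwa [hl x hx] at this
    refine ⟨⟨cγ + 2 * ((∑ j, γ' t₀ j) * (starRingEnd ℂ) (lam' t₀)).re
        + (m + 3 : ℝ) * (lam' t₀ * (starRingEnd ℂ) (lam' t₀)).re, ?_⟩, ?_, ?_, ?_, ?_⟩
    · intro t ht
      have expand : rinner (fun j => γ' t j + lam' t) (fun j => γ' t j + lam' t)
          = rinner (γ' t) (γ' t) + 2 * ((∑ j, γ' t j) * (starRingEnd ℂ) (lam' t)).re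
            + (m + 3 : ℝ) * (lam' t * (starRingEnd ℂ) (lam' t)).re := by
        have e1 : rinner (fun j => γ' t j + lam' t) (fun j => γ' t j + lam' t)
            = rinner (γ' t) (fun j => γ' t j + lam' t)
              + rinner (fun _ => lam' t) (fun j => γ' t j + lam' t) :=
          rinner_add_left (γ' t) (fun _ => lam' t) _
        have e2 : rinner (γ' t) (fun j => γ' t j + lam' t)
            = rinner (γ' t) (γ' t) + rinner (γ' t) (fun _ => lam' t) :=
          rinner_add_right (γ' t) (γ' t) (fun _ => lam' t)
        have e3 : rinner (fun _ : Fin (m+3) => lam' t) (fun j => γ' t j + lam' t)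
            = rinner (fun _ => lam' t) (γ' t) + rinner (fun _ => lam' t) (fun _ => lam' t) :=
          rinner_add_right (fun _ => lam' t) (γ' t) (fun _ => lam' t)
        rw [e1, e2, e3, rinner_const_right, rinner_const_const,
          rinner_comm (fun _ => lam' t) (γ' t), rinner_const_right]
        push_cast
        ring
      rw [expand, hGeo1c t ht, hTconst t ht, hlconst t ht]
    · intro t ht
      rw [hl t ht]
      simpa using hGeo2 t ht
    · intro t ht j hj
      rw [hl t ht]
      simpa using hGeo3 t ht j hj
    · intro t ht
      rw [hl t ht]
      simpa using h1 t ht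
    · intro t ht
      rw [hl t ht]
      simpa using hi t ht
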